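/- arXiv:2504.18597 — 3 statements merged into one kernel-verified Lean document; each statement's English description precedes it below -/
import Mathlib

section
/- Let n ≥ 1, let ω and ω' be two (not necessarily distinct) complex roots of x^n + 1, and let a|_0, …, a|_{n−1} be independent real random variables with E[a|_j] = 0 and E[(a|_j)^2] = V for all j. Define the complex random variables Z = Σ_{j=0}^{n−1} a|_j ω^j and Z' = Σ_{j=0}^{n−1} a|_j ω'^j. Then E[Z · Z'] = n·V if ω·ω' = 1, and E[Z · Z'] = 0 otherwise. -/
open MeasureTheory ProbabilityTheory

/-!
Expanding `Z · Z'`, independence and centering kill the cross terms, so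
`E[Z · Z'] = V · ∑ⱼ (ω ω')ʲ`. As `(ω ω')ⁿ = (-1)(-1) = 1`, this geometric sum is `n` when
`ω ω' = 1` and `0` otherwise.
-/

theorem Fin.sum_pow_eq_ite_of_pow_eq_one {K : Type*} [Field K] [DecidableEq K] {n : ℕ} {ζ : K}
    (hζ : ζ ^ n = 1) : ∑ j : Fin n, ζ ^ (j : ℕ) = if ζ = 1 then (n : K) else 0 := by
  rw [Fin.sum_univ_eq_sum_range]
  split_ifs with h
  · simp [h]
  · rw [geom_sum_eq h, hζ, sub_self, zero_div]

theorem mul_pow_eq_one_of_pow_add_one_eq_zero {R : Type*} [CommRing R] {n : ℕ} {x y : R}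
    (hx : x ^ n + 1 = 0) (hy : y ^ n + 1 = 0) : (x * y) ^ n = 1 := by
  rw [mul_pow, eq_neg_of_add_eq_zero_left hx, eq_neg_of_add_eq_zero_left hy, neg_one_mul, neg_neg]

section Moments

variable {Ω ι : Type*} [MeasurableSpace Ω] {μ : Measure Ω} {a : ι → Ω → ℝ}

theorem integrable_mul_of_pairwise_indepFun
    (hindep : Pairwise fun i j => IndepFun (a i) (a j) μ) (hint : ∀ i, Integrable (a i) μ)
    (hint2 : ∀ i, Integrable (fun ω => a i ω ^ 2) μ) (i j : ι) :
    Integrable (fun ω => a i ω * a j ω) μ := by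
  rcases eq_or_ne i j with rfl | hij
  · simpa [sq] using hint2 i
  · exact (hindep hij).integrable_mul (hint i) (hint j)

theorem integral_mul_eq_ite_of_pairwise_indepFun [DecidableEq ι] {V : ℝ}
    (hindep : Pairwise fun i j => IndepFun (a i) (a j) μ) (hint : ∀ i, Integrable (a i) μ)
    (hmean : ∀ i, ∫ ω, a i ω ∂μ = 0) (hvar : ∀ i, ∫ ω, a i ω ^ 2 ∂μ = V) (i j : ι) :
    ∫ ω, a i ω * a j ω ∂μ = if i = j then V else 0 := by
  rcases eq_or_ne i j with rfl | hij
  · simpa [sq] using hvar i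
  · simpa only [if_neg hij, Pi.mul_apply, hmean, zero_mul] using
      (hindep hij).integral_mul_eq_mul_integral (hint i).aestronglyMeasurable
        (hint j).aestronglyMeasurable

theorem integral_sum_mul_sum_eq [Fintype ι]
    (hint : ∀ i j, Integrable (fun ω => a i ω * a j ω) μ) (c d : ι → ℂ) :
    ∫ ω, (∑ i, (a i ω : ℂ) * c i) * (∑ j, (a j ω : ℂ) * d j) ∂μ
      = ∑ i, ∑ j, ((∫ ω, a i ω * a j ω ∂μ : ℝ) : ℂ) * (c i * d j) := by
  have hint' : ∀ i j, Integrable (fun ω => ((a i ω * a j ω : ℝ) : ℂ) * (c i * d j)) μ :=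
    fun i j => ((hint i j).ofReal (𝕜 := ℂ)).mul_const _
  have hexpand : ∀ ω, (∑ i, (a i ω : ℂ) * c i) * (∑ j, (a j ω : ℂ) * d j)
      = ∑ i, ∑ j, ((a i ω * a j ω : ℝ) : ℂ) * (c i * d j) := fun ω => by
    rw [Finset.sum_mul_sum]
    refine Finset.sum_congr rfl fun i _ => Finset.sum_congr rfl fun j _ => ?_
    push_cast
    ring
  simp_rw [hexpand]
  rw [integral_finsetSum _ fun i _ => integrable_finsetSum _ fun j _ => hint' i j]
  refine Finset.sum_congr rfl fun i _ => ?_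
  rw [integral_finsetSum _ fun j _ => hint' i j]
  refine Finset.sum_congr rfl fun j _ => ?_
  rw [integral_mul_const]
  exact congrArg (· * _) integral_ofReal

theorem integral_sum_mul_sum_of_pairwise_indepFun [Fintype ι] {V : ℝ}
    (hindep : Pairwise fun i j => IndepFun (a i) (a j) μ) (hint : ∀ i, Integrable (a i) μ)
    (hint2 : ∀ i, Integrable (fun ω => a i ω ^ 2) μ)
    (hmean : ∀ i, ∫ ω, a i ω ∂μ = 0) (hvar : ∀ i, ∫ ω, a i ω ^ 2 ∂μ = V) (c d : ι → ℂ) :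
    ∫ ω, (∑ i, (a i ω : ℂ) * c i) * (∑ j, (a j ω : ℂ) * d j) ∂μ = V * ∑ i, c i * d i := by
  classical
  rw [integral_sum_mul_sum_eq (integrable_mul_of_pairwise_indepFun hindep hint hint2),
    Finset.mul_sum]
  simp_rw [integral_mul_eq_ite_of_pairwise_indepFun hindep hint hmean hvar, apply_ite,
    Complex.ofReal_zero, ite_mul, zero_mul, Finset.sum_ite_eq, Finset.mem_univ, if_true]

end Moments

theorem stmt4_general {Ω : Type*} [MeasurableSpace Ω] (μ : Measure Ω)
    (n : ℕ) (w w' : ℂ)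
    (hw : w ^ n + 1 = 0) (hw' : w' ^ n + 1 = 0)
    (V : ℝ) (a : Fin n → Ω → ℝ)
    (hindep : iIndepFun a μ)
    (hint : ∀ j, Integrable (a j) μ)
    (hint2 : ∀ j, Integrable (fun ω => (a j ω) ^ 2) μ)
    (hmean : ∀ j, (∫ ω, a j ω ∂μ) = 0)
    (hvar : ∀ j, (∫ ω, (a j ω) ^ 2 ∂μ) = V) :
    (∫ ω, (∑ j : Fin n, (a j ω : ℂ) * w ^ (j : ℕ)) *
        (∑ j : Fin n, (a j ω : ℂ) * w' ^ (j : ℕ)) ∂μ)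
      = if w * w' = 1 then (n : ℂ) * (V : ℂ) else 0 := by
  rw [integral_sum_mul_sum_of_pairwise_indepFun (fun i j hij => hindep.indepFun hij) hint hint2
    hmean hvar]
  simp_rw [← mul_pow]
  rw [Fin.sum_pow_eq_ite_of_pow_eq_one (mul_pow_eq_one_of_pow_add_one_eq_zero hw hw')]
  split_ifs <;> ring

/-- Let `ω, ω'` be complex roots of `x^n + 1` and let
`a|_0, …, a|_{n-1}` be independent real random variables with mean `0` and second
moment `V`. With `Z = Σ_j a|_j ω^j` and `Z' = Σ_j a|_j ω'^j`, we have
`E[Z·Z'] = n·V` if `ω·ω' = 1` and `E[Z·Z'] = 0` otherwise. -/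
theorem stmt4 {Ω : Type*} [MeasurableSpace Ω] (μ : Measure Ω) [IsProbabilityMeasure μ]
    (n : ℕ) (hn : 1 ≤ n) (w w' : ℂ)
    (hw : w ^ n + 1 = 0) (hw' : w' ^ n + 1 = 0)
    (V : ℝ) (a : Fin n → Ω → ℝ)
    (hmeas : ∀ j, Measurable (a j))
    (hindep : iIndepFun a μ)
    (hint : ∀ j, Integrable (a j) μ)
    (hint2 : ∀ j, Integrable (fun ω => (a j ω) ^ 2) μ)
    (hmean : ∀ j, (∫ ω, a j ω ∂μ) = 0)
    (hvar : ∀ j, (∫ ω, (a j ω) ^ 2 ∂μ) = V) :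
    (∫ ω, (∑ j : Fin n, (a j ω : ℂ) * w ^ (j : ℕ)) *
        (∑ j : Fin n, (a j ω : ℂ) * w' ^ (j : ℕ)) ∂μ)
      = if w * w' = 1 then (n : ℂ) * (V : ℂ) else 0 :=
  stmt4_general μ n w w' hw hw' V a hindep hint hint2 hmean hvar
end

section
/- Let n ≥ 1 and let I, K ≥ 0 be integers. Let {b_μ(ι) : 0 ≤ μ ≤ K, 0 ≤ ι ≤ I} and {b'_μ(ι) : 0 ≤ μ ≤ K, 0 ≤ ι ≤ I} be two families of random polynomials in R_n, with the two families independent of each other and all coefficients having finite moments of every order. Assume each family satisfies: E[b_μ(ι)|_j] = 0 for all μ, ι, j, and Cov(b_{μ1}(ι1)|_{j1}, b_{μ2}(ι2)|_{j2}) = 0 whenever μ1 ≠ μ2 or j1 ≠ j2 (for all ι1, ι2); and likewise for the primed family. Define, for 0 ≤ μ ≤ 2K and 0 ≤ ι ≤ 2I, b^{mul}_μ(ι) = Σ_{ι1+ι2=ι} Σ_{μ1+μ2=μ} b_{μ1}(ι1) · b'_{μ2}(ι2), the products computed in R_n. Then E[b^{mul}_μ(ι)|_i] = 0 for all μ, ι,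 i, and Cov(b^{mul}_{μ1}(ι1)|_{i1}, b^{mul}_{μ2}(ι2)|_{i2}) = 0 whenever μ1 ≠ μ2 or i1 ≠ i2 (for all ι1, ι2). -/
open MeasureTheory ProbabilityTheory Polynomial
open scoped NNReal ENNReal

/-- The polynomial in `ℝ[x]` of degree `< n` with coefficients `c 0, …, c (n-1)`;
it is the canonical representative of an element of `R_n = ℝ[x]/(x^n+1)`. -/
noncomputable def polyOf (n : ℕ) (c : Fin n → ℝ) : Polynomial ℝ :=
  ∑ j : Fin n, Polynomial.C (c j) * Polynomial.X ^ (j : ℕ)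

/-- The `i`-th coefficient of the unique representative of degree `< n` of
`p mod (x^n + 1)`, i.e. the `i`-th coefficient of the image of `p` in `R_n`. -/
noncomputable def redCoeff (n : ℕ) (p : Polynomial ℝ) (i : ℕ) : ℝ :=
  (p %ₘ (Polynomial.X ^ n + 1)).coeff i

/-- Covariance of two real random variables. -/
noncomputable def cov {Ω : Type*} [MeasurableSpace Ω] (P : Measure Ω) (X Y : Ω → ℝ) : ℝ :=
  ∫ ω, (X ω - ∫ ω', X ω' ∂P) * (Y ω - ∫ ω', Y ω' ∂P) ∂P

/-- The `i`-th coefficient of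
`b^{mul}_μ(ι) = Σ_{ι1+ι2=ι} Σ_{μ1+μ2=μ} b_{μ1}(ι1)·b'_{μ2}(ι2)`
(products computed in `R_n`), where `(ι1, ι2)` and `(μ1, μ2)` range over pairs of
nonnegative integers `≤ I` resp. `≤ K` with sums `ι` resp. `μ`. -/
noncomputable def bmulCoeff {Ω : Type*} (n I K : ℕ)
    (b b' : Fin (I + 1) → Fin (K + 1) → Fin n → Ω → ℝ)
    (ι μ : ℕ) (i : Fin n) (ω : Ω) : ℝ :=
  ∑ ι1 : Fin (I + 1), ∑ ι2 : Fin (I + 1), ∑ μ1 : Fin (K + 1), ∑ μ2 : Fin (K + 1),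
    if (ι1 : ℕ) + (ι2 : ℕ) = ι ∧ (μ1 : ℕ) + (μ2 : ℕ) = μ then
      redCoeff n (polyOf n (fun j => b ι1 μ1 j ω) * polyOf n (fun j => b' ι2 μ2 j ω)) i
    else 0

/-!
Expanding the product in `R_n`, each coefficient `b^{mul}_μ(ι)|_i` is a bilinear form
`Σ c_{q q'} b_q b'_{q'}` in the coefficients of the two families, in which `x^j · x^k` contributes
only to the coefficient `(j + k) mod n` (with sign `(-1)^⌊(j+k)/n⌋`, as `x^n = -1`). Independence
of the families makes such a form centered and factors the covariance of two of them as
`Σ c_{q q'} c'_{r r'} E[b_q b_r] E[b'_{q'} b'_{r'}]`. A term survives only if `q, r` and `q', r'`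
agree in their `(μ, j)`-components; then `μ₁ = μ_q + μ_{q'} = μ₂`, and both weights are
coefficients of the same monomial `x^{j+k}`, which has a single nonzero coefficient, so `i₁ = i₂`.
-/

theorem X_pow_modByMonic_X_pow_add_one {R : Type*} [CommRing R] [Nontrivial R] {n : ℕ}
    (hn : n ≠ 0) (m : ℕ) :
    (X : R[X]) ^ m %ₘ (X ^ n + 1) = C ((-1) ^ (m / n)) * X ^ (m % n) := by
  have hmonic : ((X : R[X]) ^ n + 1).Monic := by
    simpa using monic_X_pow_add_C (1 : R) hn
  rw [modByMonic_eq_of_dvd_sub hmonic (p₂ := C ((-1) ^ (m / n)) * X ^ (m % n)),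
    (modByMonic_eq_self_iff hmonic).2]
  · refine (degree_C_mul_X_pow_le _ _).trans_lt ?_
    rw [← C_1, degree_X_pow_add_C (Nat.pos_of_ne_zero hn)]
    exact_mod_cast Nat.mod_lt m (Nat.pos_of_ne_zero hn)
  · -- `X ^ n ≡ -1` modulo `X ^ n + 1`
    have h := (sub_dvd_pow_sub_pow ((X : R[X]) ^ n) (-1) (m / n)).mul_left (X ^ (m % n))
    rw [sub_neg_eq_add] at h
    convert h using 1
    rw [C_pow, C_neg, C_1, ← pow_mul, mul_sub, ← pow_add, Nat.mod_add_div, mul_comm]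

theorem redCoeff_X_pow_mul_redCoeff_X_pow_eq_zero {n : ℕ} (hn : n ≠ 0) (m : ℕ) {i₁ i₂ : ℕ}
    (h : i₁ ≠ i₂) : redCoeff n (X ^ m) i₁ * redCoeff n (X ^ m) i₂ = 0 := by
  simp only [redCoeff, X_pow_modByMonic_X_pow_add_one hn, coeff_C_mul_X_pow]
  split_ifs <;> simp_all

theorem redCoeff_polyOf_mul (n : ℕ) (c d : Fin n → ℝ) (i : ℕ) :
    redCoeff n (polyOf n c * polyOf n d) i
      = ∑ j : Fin n, ∑ k : Fin n, c j * d k * redCoeff n (X ^ ((j : ℕ) + k)) i := by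
  have hlin : ∀ p, redCoeff n p i = (lcoeff ℝ i ∘ₗ modByMonicHom (X ^ n + 1)) p := fun _ => rfl
  have hprod : polyOf n c * polyOf n d
      = ∑ j : Fin n, ∑ k : Fin n, (c j * d k) • (X : ℝ[X]) ^ ((j : ℕ) + k) := by
    simp only [polyOf, Finset.sum_mul_sum, smul_eq_C_mul, C_mul, pow_add]
    exact Finset.sum_congr rfl fun _ _ => Finset.sum_congr rfl fun _ _ => by ring
  simp only [hlin, hprod, map_sum, map_smul, smul_eq_mul]

/-- An index `q = (ι, μ, j)` addresses the coefficient `b_μ(ι)|_j`; this is the weight of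
`b_q · b'_{q'}` in `b^{mul}_μ(ι)|_i`. -/
noncomputable def mulWeight (n I K ι μ : ℕ) (i : Fin n)
    (q q' : Fin (I + 1) × Fin (K + 1) × Fin n) : ℝ :=
  if (q.1 : ℕ) + q'.1 = ι ∧ (q.2.1 : ℕ) + q'.2.1 = μ then
    redCoeff n (X ^ ((q.2.2 : ℕ) + q'.2.2)) i
  else 0

theorem bmulCoeff_eq_sum {Ω : Type*} (n I K : ℕ)
    (b b' : Fin (I + 1) → Fin (K + 1) → Fin n → Ω → ℝ) (ι μ : ℕ) (i : Fin n) (ω : Ω) :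
    bmulCoeff n I K b b' ι μ i ω = ∑ q, ∑ q', mulWeight n I K ι μ i q q' *
      (b q.1 q.2.1 q.2.2 ω * b' q'.1 q'.2.1 q'.2.2 ω) := by
  simp only [bmulCoeff, mulWeight, redCoeff_polyOf_mul, Fintype.sum_prod_type, ite_mul, zero_mul]
  refine Finset.sum_congr rfl fun ι₁ _ => ?_
  conv_rhs => rw [Finset.sum_comm_cycle]
  refine Finset.sum_congr rfl fun ι₂ _ => Finset.sum_congr rfl fun μ₁ _ => ?_
  conv_rhs => rw [Finset.sum_comm]
  refine Finset.sum_congr rfl fun μ₂ _ => ?_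
  split_ifs
  · exact Finset.sum_congr rfl fun j _ => Finset.sum_congr rfl fun k _ => by ring
  · simp

theorem mulWeight_mul_mulWeight_eq_zero {n I K ι₁ ι₂ μ₁ μ₂ : ℕ} {i₁ i₂ : Fin n}
    (h : μ₁ ≠ μ₂ ∨ i₁ ≠ i₂) {q q' r r' : Fin (I + 1) × Fin (K + 1) × Fin n}
    (hq : q.2 = r.2) (hq' : q'.2 = r'.2) :
    mulWeight n I K ι₁ μ₁ i₁ q q' * mulWeight n I K ι₂ μ₂ i₂ r r' = 0 := by
  unfold mulWeight
  split_ifs with h₁ h₂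
  · rw [hq, hq']
    rcases h with hμ | hi
    · exact absurd (h₁.2.symm.trans (hq ▸ hq' ▸ h₂.2)) hμ
    · exact redCoeff_X_pow_mul_redCoeff_X_pow_eq_zero i₁.pos.ne' _ (Fin.val_ne_of_ne hi)
  all_goals simp

theorem cov_eq_integral_mul {Ω : Type*} [MeasurableSpace Ω] {P : Measure Ω} {X Y : Ω → ℝ}
    (hX : ∫ ω, X ω ∂P = 0) (hY : ∫ ω, Y ω ∂P = 0) : cov P X Y = ∫ ω, X ω * Y ω ∂P := by
  simp only [cov, hX, hY, sub_zero]

section IndependentFamilies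

variable {Ω α β : Type*} [MeasurableSpace Ω] {P : Measure Ω} [Fintype α] [Fintype β]
  {X : α → Ω → ℝ} {Y : β → Ω → ℝ}

theorem integral_sum_mul_eq_zero (hXY : IndepFun (fun ω a => X a ω) (fun ω b => Y b ω) P)
    (hX : ∀ a, Integrable (X a) P) (hY : ∀ b, Integrable (Y b) P)
    (hX₀ : ∀ a, ∫ ω, X a ω ∂P = 0) (c : α → β → ℝ) :
    ∫ ω, ∑ a, ∑ b, c a b * (X a ω * Y b ω) ∂P = 0 := by
  have hind : ∀ a b, IndepFun (X a) (Y b) P := fun a b =>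
    hXY.comp (measurable_pi_apply a) (measurable_pi_apply b)
  have hint : ∀ a b, Integrable (fun ω => X a ω * Y b ω) P := fun a b =>
    (hind a b).integrable_mul (hX a) (hY b)
  rw [integral_finsetSum _ fun a _ => integrable_finsetSum _ fun b _ => (hint a b).const_mul _]
  refine Finset.sum_eq_zero fun a _ => ?_
  rw [integral_finsetSum _ fun b _ => (hint a b).const_mul _]
  refine Finset.sum_eq_zero fun b _ => ?_
  rw [integral_const_mul, (hind a b).integral_fun_mul_eq_mul_integral (hX a).1 (hY b).1, hX₀,
    zero_mul, mul_zero]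

theorem integral_sum_mul_mul_sum_mul
    (hXY : IndepFun (fun ω a => X a ω) (fun ω b => Y b ω) P)
    (hX : ∀ a, MemLp (X a) 2 P) (hY : ∀ b, MemLp (Y b) 2 P) (c d : α → β → ℝ) :
    ∫ ω, (∑ a, ∑ b, c a b * (X a ω * Y b ω)) * (∑ a, ∑ b, d a b * (X a ω * Y b ω)) ∂P
      = ∑ a₁, ∑ b₁, ∑ a₂, ∑ b₂, c a₁ b₁ * d a₂ b₂ *
          ((∫ ω, X a₁ ω * X a₂ ω ∂P) * ∫ ω, Y b₁ ω * Y b₂ ω ∂P) := by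
  have hind : ∀ a₁ a₂ b₁ b₂, IndepFun (fun ω => X a₁ ω * X a₂ ω) (fun ω => Y b₁ ω * Y b₂ ω) P :=
    fun a₁ a₂ b₁ b₂ => hXY.comp (φ := fun x : α → ℝ => x a₁ * x a₂)
      (ψ := fun y : β → ℝ => y b₁ * y b₂) (by fun_prop) (by fun_prop)
  have hint : ∀ a₁ a₂ b₁ b₂,
      Integrable (fun ω => (X a₁ ω * X a₂ ω) * (Y b₁ ω * Y b₂ ω)) P := fun a₁ a₂ b₁ b₂ =>
    (hind a₁ a₂ b₁ b₂).integrable_mul ((hX a₁).integrable_mul (hX a₂))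
      ((hY b₁).integrable_mul (hY b₂))
  have hexpand : ∀ ω, (∑ a, ∑ b, c a b * (X a ω * Y b ω)) * (∑ a, ∑ b, d a b * (X a ω * Y b ω))
      = ∑ p : (α × β) × (α × β), c p.1.1 p.1.2 * d p.2.1 p.2.2 *
          ((X p.1.1 ω * X p.2.1 ω) * (Y p.1.2 ω * Y p.2.2 ω)) := by
    intro ω
    simp_rw [Finset.sum_mul, Finset.mul_sum, Fintype.sum_prod_type]
    exact Finset.sum_congr rfl fun _ _ => Finset.sum_congr rfl fun _ _ =>
      Finset.sum_congr rfl fun _ _ => Finset.sum_congr rfl fun _ _ => by ring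
  simp_rw [hexpand]
  rw [integral_finsetSum _ fun _ _ => (hint _ _ _ _).const_mul _]
  simp only [integral_const_mul, Fintype.sum_prod_type]
  refine Finset.sum_congr rfl fun a₁ _ => Finset.sum_congr rfl fun b₁ _ =>
    Finset.sum_congr rfl fun a₂ _ => Finset.sum_congr rfl fun b₂ _ => ?_
  rw [(hind a₁ a₂ b₁ b₂).integral_fun_mul_eq_mul_integral
    ((hX a₁).1.mul (hX a₂).1) ((hY b₁).1.mul (hY b₂).1)]

end IndependentFamilies

theorem stmt9_general {Ω : Type*} [MeasurableSpace Ω] (P : Measure Ω)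
    (n : ℕ) (I K : ℕ)
    (b b' : Fin (I + 1) → Fin (K + 1) → Fin n → Ω → ℝ)
    -- measurability and finite moments of every order for all coefficients
    (hbmom : ∀ ι μ j (p : ℕ), Integrable (fun ω => (b ι μ j ω) ^ p) P)
    (hb'mom : ∀ ι μ j (p : ℕ), Integrable (fun ω => (b' ι μ j ω) ^ p) P)
    -- the two families are independent of each other
    (hindep : IndepFun
      (fun ω (q : Fin (I + 1) × Fin (K + 1) × Fin n) => b q.1 q.2.1 q.2.2 ω)
      (fun ω (q : Fin (I + 1) × Fin (K + 1) × Fin n) => b' q.1 q.2.1 q.2.2 ω) P)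
    -- each family is centered with the stated vanishing covariances
    (hbmean : ∀ ι μ j, (∫ ω, b ι μ j ω ∂P) = 0)
    (hb'mean : ∀ ι μ j, (∫ ω, b' ι μ j ω ∂P) = 0)
    (hbcov : ∀ ι1 ι2 μ1 μ2 j1 j2, (μ1 ≠ μ2 ∨ j1 ≠ j2) →
      cov P (b ι1 μ1 j1) (b ι2 μ2 j2) = 0)
    (hb'cov : ∀ ι1 ι2 μ1 μ2 j1 j2, (μ1 ≠ μ2 ∨ j1 ≠ j2) →
      cov P (b' ι1 μ1 j1) (b' ι2 μ2 j2) = 0) :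
    (∀ (ι μ : ℕ), ι ≤ 2 * I → μ ≤ 2 * K → ∀ i : Fin n,
      (∫ ω, bmulCoeff n I K b b' ι μ i ω ∂P) = 0) ∧
    (∀ (ι1 ι2 μ1 μ2 : ℕ), ι1 ≤ 2 * I → ι2 ≤ 2 * I → μ1 ≤ 2 * K → μ2 ≤ 2 * K →
      ∀ i1 i2 : Fin n, (μ1 ≠ μ2 ∨ i1 ≠ i2) →
      cov P (bmulCoeff n I K b b' ι1 μ1 i1) (bmulCoeff n I K b b' ι2 μ2 i2) = 0) := by
  have integrable {f : Ω → ℝ} (hf : ∀ p : ℕ, Integrable (fun ω => f ω ^ p) P) :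
      Integrable f P := by simpa using hf 1
  have memLp_two {f : Ω → ℝ} (hf : ∀ p : ℕ, Integrable (fun ω => f ω ^ p) P) : MemLp f 2 P :=
    (memLp_two_iff_integrable_sq (integrable hf).1).2 (hf 2)
  have uncorrelated {f : Fin (I + 1) → Fin (K + 1) → Fin n → Ω → ℝ}
      (hmean : ∀ ι μ j, ∫ ω, f ι μ j ω ∂P = 0)
      (hcov : ∀ ι1 ι2 μ1 μ2 j1 j2, (μ1 ≠ μ2 ∨ j1 ≠ j2) → cov P (f ι1 μ1 j1) (f ι2 μ2 j2) = 0)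
      (q r : Fin (I + 1) × Fin (K + 1) × Fin n) (hqr : q.2 ≠ r.2) :
      ∫ ω, f q.1 q.2.1 q.2.2 ω * f r.1 r.2.1 r.2.2 ω ∂P = 0 := by
    rw [← cov_eq_integral_mul (hmean _ _ _) (hmean _ _ _)]
    exact hcov _ _ _ _ _ _ (not_and_or.1 fun h => hqr (Prod.ext h.1 h.2))
  have hmean : ∀ ι μ i, ∫ ω, bmulCoeff n I K b b' ι μ i ω ∂P = 0 := fun ι μ i => by
    simp_rw [bmulCoeff_eq_sum]
    exact integral_sum_mul_eq_zero hindep (fun q => integrable (hbmom q.1 q.2.1 q.2.2))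
      (fun q => integrable (hb'mom q.1 q.2.1 q.2.2)) (fun q => hbmean ..) _
  refine ⟨fun ι μ _ _ i => hmean ι μ i, fun ι₁ ι₂ μ₁ μ₂ _ _ _ _ i₁ i₂ h => ?_⟩
  rw [cov_eq_integral_mul (hmean ..) (hmean ..)]
  simp_rw [bmulCoeff_eq_sum]
  rw [integral_sum_mul_mul_sum_mul hindep (fun q => memLp_two (hbmom q.1 q.2.1 q.2.2))
    (fun q => memLp_two (hb'mom q.1 q.2.1 q.2.2))]
  refine Finset.sum_eq_zero fun q _ => Finset.sum_eq_zero fun q' _ =>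
    Finset.sum_eq_zero fun r _ => Finset.sum_eq_zero fun r' _ => ?_
  by_cases hq : q.2 = r.2
  · by_cases hq' : q'.2 = r'.2
    · rw [mulWeight_mul_mulWeight_eq_zero h hq hq', zero_mul]
    · rw [uncorrelated hb'mean hb'cov q' r' hq', mul_zero, mul_zero]
  · rw [uncorrelated hbmean hbcov q r hq, zero_mul, mul_zero]

/-- The coefficients of the product family
`b^{mul}_μ(ι) = Σ_{ι1+ι2=ι} Σ_{μ1+μ2=μ} b_{μ1}(ι1)·b'_{μ2}(ι2)` are again centered,
and uncorrelated whenever `μ1 ≠ μ2` or `i1 ≠ i2`. -/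
theorem stmt9 {Ω : Type*} [MeasurableSpace Ω] (P : Measure Ω) [IsProbabilityMeasure P]
    (n : ℕ) (hn : 1 ≤ n) (I K : ℕ)
    (b b' : Fin (I + 1) → Fin (K + 1) → Fin n → Ω → ℝ)
    -- measurability and finite moments of every order for all coefficients
    (hbmeas : ∀ ι μ j, Measurable (b ι μ j))
    (hb'meas : ∀ ι μ j, Measurable (b' ι μ j))
    (hbmom : ∀ ι μ j (p : ℕ), Integrable (fun ω => (b ι μ j ω) ^ p) P)
    (hb'mom : ∀ ι μ j (p : ℕ), Integrable (fun ω => (b' ι μ j ω) ^ p) P)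
    -- the two families are independent of each other
    (hindep : IndepFun
      (fun ω (q : Fin (I + 1) × Fin (K + 1) × Fin n) => b q.1 q.2.1 q.2.2 ω)
      (fun ω (q : Fin (I + 1) × Fin (K + 1) × Fin n) => b' q.1 q.2.1 q.2.2 ω) P)
    -- each family is centered with the stated vanishing covariances
    (hbmean : ∀ ι μ j, (∫ ω, b ι μ j ω ∂P) = 0)
    (hb'mean : ∀ ι μ j, (∫ ω, b' ι μ j ω ∂P) = 0)
    (hbcov : ∀ ι1 ι2 μ1 μ2 j1 j2, (μ1 ≠ μ2 ∨ j1 ≠ j2) →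
      cov P (b ι1 μ1 j1) (b ι2 μ2 j2) = 0)
    (hb'cov : ∀ ι1 ι2 μ1 μ2 j1 j2, (μ1 ≠ μ2 ∨ j1 ≠ j2) →
      cov P (b' ι1 μ1 j1) (b' ι2 μ2 j2) = 0) :
    (∀ (ι μ : ℕ), ι ≤ 2 * I → μ ≤ 2 * K → ∀ i : Fin n,
      (∫ ω, bmulCoeff n I K b b' ι μ i ω ∂P) = 0) ∧
    (∀ (ι1 ι2 μ1 μ2 : ℕ), ι1 ≤ 2 * I → ι2 ≤ 2 * I → μ1 ≤ 2 * K → μ2 ≤ 2 * K →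
      ∀ i1 i2 : Fin n, (μ1 ≠ μ2 ∨ i1 ≠ i2) →
      cov P (bmulCoeff n I K b b' ι1 μ1 i1) (bmulCoeff n I K b b' ι2 μ2 i2) = 0) :=
  stmt9_general P n I K b b' hbmom hb'mom hindep hbmean hb'mean hbcov hb'cov
end

section
/- (Variance after modulus switching.) Let n ≥ 1, let t > 0 and 0 < q' ≤ q be real numbers, and let V_s > 0. Let ν, d_0, d_1, s be mutually independent random polynomials in R_n, where d_0 and d_1 have independent mean-zero coefficients of variance t²/12, s has independent identically distributed mean-zero coefficients of variance V_s, and the coefficients of ν are square-integrable. Then for every 0 ≤ i ≤ n−1, Var( ( (q'/q)·ν + d_0 + d_1·s )|_i ) = (q'²/q²)·Var(ν|_i) + (t²/12)·(1 + n·V_s), products computed in R_n. -/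
/-!
Reduction modulo `x ^ n + 1` folds `x ^ (n + i)` onto `-x ^ i`, so the `i`-th coefficient of the
switched noise is `(q'/q) ν_i + d₀_i + ∑_j ±d₁_j s_(i-j)`, a negacyclic convolution. Because
`j ↦ i - j` is injective and the coefficients of `d₁` and `s` are jointly independent, the `n`
products `±d₁_j s_(i-j)` are pairwise independent with mean zero and variance `(t²/12) V_s` each,
and the three summands are independent, so all the variances add up.
-/

open MeasureTheory ProbabilityTheory Polynomial
open scoped NNReal ENNReal

lemma Polynomial.monic_X_pow_add_one {R : Type*} [Semiring R] {n : ℕ} (hn : n ≠ 0) :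
    (X ^ n + 1 : R[X]).Monic := by
  simpa using monic_X_pow_add_C (1 : R) hn

lemma coeff_polyOf (n : ℕ) (c : Fin n → ℝ) (m : ℕ) :
    (polyOf n c).coeff m = if h : m < n then c ⟨m, h⟩ else 0 := by
  simp only [polyOf, finsetSum_coeff, coeff_C_mul_X_pow]
  split_ifs with h
  · rw [Finset.sum_eq_single_of_mem (⟨m, h⟩ : Fin n) (Finset.mem_univ _) fun j _ hj => ?_]
    · simp
    · rw [if_neg fun hm => hj (Fin.ext hm.symm)]
  · exact Finset.sum_eq_zero fun j _ => if_neg (by omega)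

lemma degree_polyOf_lt (n : ℕ) (c : Fin n → ℝ) : (polyOf n c).degree < n :=
  degree_lt_iff_coeff_zero _ _ |>.2 fun m hm => by
    rw [coeff_polyOf, dif_neg (by exact_mod_cast hm.not_gt)]

lemma redCoeff_polyOf {n : ℕ} (c : Fin n → ℝ) (i : Fin n) : redCoeff n (polyOf n c) i = c i := by
  have hn : n ≠ 0 := i.pos.ne'
  have hdeg : (X ^ n + 1 : ℝ[X]).degree = n := by
    rw [← C_1, degree_X_pow_add_C (Nat.pos_of_ne_zero hn)]
  rw [redCoeff, (modByMonic_eq_self_iff (monic_X_pow_add_one hn)).2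
    (hdeg ▸ degree_polyOf_lt n c), coeff_polyOf, dif_pos i.2]

lemma redCoeff_add (n : ℕ) (p r : ℝ[X]) (i : ℕ) :
    redCoeff n (p + r) i = redCoeff n p i + redCoeff n r i := by
  simp [redCoeff, add_modByMonic]

lemma redCoeff_C_mul (n : ℕ) (a : ℝ) (p : ℝ[X]) (i : ℕ) :
    redCoeff n (C a * p) i = a * redCoeff n p i := by
  simp [redCoeff, ← smul_eq_C_mul, smul_modByMonic]

lemma redCoeff_eq_coeff_sub_coeff {n : ℕ} (p : ℝ[X]) (hp : ∀ m, 2 * n ≤ m → p.coeff m = 0)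
    (i : Fin n) : redCoeff n p i = p.coeff i - p.coeff (n + i) := by
  set H := polyOf n fun j => p.coeff (n + j)
  have hdvd : X ^ n + 1 ∣ p - polyOf n fun j => p.coeff j - p.coeff (n + j) := by
    refine ⟨H, ext fun m => ?_⟩
    have hX : (X ^ n + 1) * H = X ^ n * H + H := by ring
    rw [hX, coeff_sub, coeff_add, coeff_X_pow_mul', coeff_polyOf, coeff_polyOf, coeff_polyOf]
    by_cases hm : m < n
    · simp [hm, show ¬ n ≤ m by omega]
    by_cases hm' : m < 2 * n
    · simp [hm, show n ≤ m by omega, show m - n < n by omega, show n + (m - n) = m by omega]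
    · simp [hm, show n ≤ m by omega, show ¬ m - n < n by omega, hp m (by omega)]
  rw [redCoeff, modByMonic_eq_of_dvd_sub (monic_X_pow_add_one i.pos.ne') hdvd, ← redCoeff,
    redCoeff_polyOf]

lemma coeff_polyOf_mul_polyOf (n : ℕ) (a b : Fin n → ℝ) (m : ℕ) :
    (polyOf n a * polyOf n b).coeff m =
      ∑ j : Fin n, ∑ k : Fin n, if (j : ℕ) + k = m then a j * b k else 0 := by
  simp only [polyOf, Finset.sum_mul_sum, finsetSum_coeff]
  refine Fintype.sum_congr _ _ fun j => Fintype.sum_congr _ _ fun k => ?_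
  rw [show C (a j) * X ^ (j : ℕ) * (C (b k) * X ^ (k : ℕ)) = C (a j * b k) * X ^ ((j : ℕ) + k) by
    rw [C_mul, pow_add]; ring, coeff_C_mul_X_pow]
  simp only [eq_comm]

lemma redCoeff_polyOf_mul_polyOf {n : ℕ} (a b : Fin n → ℝ) (i : Fin n) :
    redCoeff n (polyOf n a * polyOf n b) i =
      ∑ j : Fin n, (if j ≤ i then 1 else -1) * (a j * b (i - j)) := by
  have hfold : ∀ j k : Fin n,
      ((if (j : ℕ) + k = i then a j * b k else 0) - if (j : ℕ) + k = n + i then a j * b k else 0)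
        = if k = i - j then (if j ≤ i then 1 else -1) * (a j * b (i - j)) else 0 := by
    intro j k
    rcases le_or_gt j i with h | h
    · have hk : k = i - j ↔ (j : ℕ) + k = i := by
        rw [Fin.ext_iff, Fin.coe_sub_iff_le.2 h]; have := Fin.le_def.1 h; omega
      simp only [hk, if_neg (show (j : ℕ) + k ≠ n + i by omega), sub_zero, if_pos h, one_mul]
      split_ifs with hc
      · rw [hk.2 hc]
      · rfl
    · have hk : k = i - j ↔ (j : ℕ) + k = n + i := by
        rw [Fin.ext_iff, Fin.coe_sub_iff_lt.2 h]; have := Fin.lt_def.1 h; omega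
      simp only [hk, if_neg (show (j : ℕ) + k ≠ i by have := Fin.lt_def.1 h; omega), zero_sub,
        if_neg h.not_ge, neg_one_mul]
      split_ifs with hc
      · rw [hk.2 hc]
      · simp
  rw [redCoeff_eq_coeff_sub_coeff _ (fun m hm => ?_), coeff_polyOf_mul_polyOf,
    coeff_polyOf_mul_polyOf, ← Finset.sum_sub_distrib]
  · refine Fintype.sum_congr _ _ fun j => ?_
    simp_rw [← Finset.sum_sub_distrib, hfold, Finset.sum_ite_eq', Finset.mem_univ, if_true]
  · rw [coeff_polyOf_mul_polyOf]
    exact Finset.sum_eq_zero fun j _ => Finset.sum_eq_zero fun k _ => if_neg (by omega)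

namespace ProbabilityTheory

variable {Ω : Type*} [MeasurableSpace Ω] {μ : Measure Ω}

lemma iIndepFun.sumElim {ι κ β : Type*} [MeasurableSpace β] {X : ι → Ω → β} {Y : κ → Ω → β}
    (hX : iIndepFun X μ) (hY : iIndepFun Y μ)
    (hXY : IndepFun (fun ω i => X i ω) (fun ω k => Y k ω) μ) :
    iIndepFun (Sum.elim X Y) μ := by
  classical
  rw [iIndepFun_iff_measure_inter_preimage_eq_mul]
  intro S sets hsets
  set A := ⋂ i ∈ S.toLeft, (fun v : ι → β => v i) ⁻¹' sets (.inl i)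
  set B := ⋂ k ∈ S.toRight, (fun v : κ → β => v k) ⁻¹' sets (.inr k)
  have hA : MeasurableSet A := .biInter S.toLeft.countable_toSet fun i hi =>
    measurable_pi_apply i (hsets _ (Finset.mem_toLeft.1 hi))
  have hB : MeasurableSet B := .biInter S.toRight.countable_toSet fun k hk =>
    measurable_pi_apply k (hsets _ (Finset.mem_toRight.1 hk))
  have hsplit : ⋂ x ∈ S, Sum.elim X Y x ⁻¹' sets x =
      (⋂ i ∈ S.toLeft, X i ⁻¹' sets (.inl i)) ∩ ⋂ k ∈ S.toRight, Y k ⁻¹' sets (.inr k) := by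
    ext ω
    simp only [Set.mem_iInter, Set.mem_inter_iff, Set.mem_preimage, Finset.mem_toLeft,
      Finset.mem_toRight]
    exact ⟨fun h => ⟨fun i hi => h _ hi, fun k hk => h _ hk⟩,
      fun ⟨h₁, h₂⟩ x hx => x.rec (fun i hi => h₁ i hi) (fun k hk => h₂ k hk) hx⟩
  have hXY' := hXY.measure_inter_preimage_eq_mul _ _ hA hB
  simp only [A, B, Set.preimage_iInter₂, Set.preimage_preimage] at hXY'
  rw [hsplit, hXY', hX.measure_inter_preimage_eq_mul _ fun i hi => hsets _ (Finset.mem_toLeft.1 hi),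
    hY.measure_inter_preimage_eq_mul _ fun k hk => hsets _ (Finset.mem_toRight.1 hk),
    Finset.prod_sum_eq_prod_toLeft_mul_prod_toRight]
  rfl

lemma IndepFun.memLp_two_mul {X Y : Ω → ℝ} (h : IndepFun X Y μ) (hX : MemLp X 2 μ)
    (hY : MemLp Y 2 μ) : MemLp (X * Y) 2 μ := by
  refine (memLp_two_iff_integrable_sq (hX.1.mul hY.1)).2 ?_
  simpa only [Pi.mul_def, Function.comp_apply, id_eq, mul_pow] using
    (h.comp (measurable_id.pow_const 2) (measurable_id.pow_const 2)).integrable_mul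
      hX.integrable_sq hY.integrable_sq

lemma IndepFun.variance_mul {X Y : Ω → ℝ} (h : IndepFun X Y μ) (hX : MemLp X 2 μ)
    (hY : MemLp Y 2 μ) (hX₀ : ∫ ω, X ω ∂μ = 0) (hY₀ : ∫ ω, Y ω ∂μ = 0) :
    variance (X * Y) μ = variance X μ * variance Y μ := by
  have hXY₀ : ∫ ω, (X * Y) ω ∂μ = 0 := by
    rw [h.integral_mul_eq_mul_integral hX.1 hY.1, hX₀, zero_mul]
  rw [variance_of_integral_eq_zero (hX.1.mul hY.1).aemeasurable hXY₀,
    variance_of_integral_eq_zero hX.1.aemeasurable hX₀,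
    variance_of_integral_eq_zero hY.1.aemeasurable hY₀]
  simpa only [Pi.mul_def, Function.comp_apply, id_eq, mul_pow] using
    (h.comp (measurable_id.pow_const 2) (measurable_id.pow_const 2)).integral_mul_eq_mul_integral
      hX.integrable_sq.1 hY.integrable_sq.1

section SumOfProducts

variable {ι κ : Type*} [Fintype ι] {X : ι → Ω → ℝ} {Y : κ → Ω → ℝ}

lemma memLp_two_sum_mul (hXY : iIndepFun (Sum.elim X Y) μ) (hX : ∀ j, MemLp (X j) 2 μ)
    (hY : ∀ k, MemLp (Y k) 2 μ) (σ : ι → κ) (c : ι → ℝ) :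
    MemLp (fun ω => ∑ j, c j * (X j ω * Y (σ j) ω)) 2 μ := by
  refine memLp_finsetSum _ fun j _ => ?_
  exact ((hXY.indepFun (Sum.inl_ne_inr (a := j) (b := σ j))).memLp_two_mul (hX j)
    (hY (σ j))).const_mul _

lemma variance_sum_mul (hXY : iIndepFun (Sum.elim X Y) μ) (hX : ∀ j, MemLp (X j) 2 μ)
    (hY : ∀ k, MemLp (Y k) 2 μ) (hX₀ : ∀ j, ∫ ω, X j ω ∂μ = 0) (hY₀ : ∀ k, ∫ ω, Y k ω ∂μ = 0)
    {σ : ι → κ} (hσ : σ.Injective) (c : ι → ℝ) :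
    variance (fun ω => ∑ j, c j * (X j ω * Y (σ j) ω)) μ =
      ∑ j, c j ^ 2 * (variance (X j) μ * variance (Y (σ j)) μ) := by
  have hXYj : ∀ j, IndepFun (X j) (Y (σ j)) μ := fun j =>
    hXY.indepFun (Sum.inl_ne_inr (a := j) (b := σ j))
  have hmeas : ∀ x, AEMeasurable (Sum.elim X Y x) μ := by
    rintro (j | k)
    exacts [(hX j).1.aemeasurable, (hY k).1.aemeasurable]
  have hpair : Set.Pairwise (Finset.univ : Finset ι)
      fun j j' => IndepFun (fun ω => c j * (X j ω * Y (σ j) ω))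
        (fun ω => c j' * (X j' ω * Y (σ j') ω)) μ := by
    intro j _ j' _ hjj'
    exact (hXY.indepFun_prodMk_prodMk₀ hmeas (.inl j) (.inr (σ j)) (.inl j') (.inr (σ j'))
      (by simpa using hjj') (by simp) (by simp) (by simpa using hσ.ne hjj')).comp
      (measurable_const.mul (measurable_fst.mul measurable_snd))
      (measurable_const.mul (measurable_fst.mul measurable_snd))
  rw [← Finset.sum_fn, IndepFun.variance_sum (X := fun j ω => c j * (X j ω * Y (σ j) ω))
    (fun j _ => ((hXYj j).memLp_two_mul (hX j) (hY (σ j))).const_mul _) hpair]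
  refine Fintype.sum_congr _ _ fun j => ?_
  rw [variance_const_mul, ← (hXYj j).variance_mul (hX j) (hY (σ j)) (hX₀ j) (hY₀ (σ j))]
  rfl

end SumOfProducts

end ProbabilityTheory

theorem stmt13_general {Ω : Type*} [MeasurableSpace Ω] (P : Measure Ω) [IsProbabilityMeasure P]
    (n : ℕ) (t q q' : ℝ) (Vs : ℝ)
    (ν d₀ d₁ s : Fin n → Ω → ℝ)
    -- `ν, d₀, d₁, s` are mutually independent
    (hindep : iIndepFun
      (![fun ω (j : Fin n) => ν j ω, fun ω j => d₀ j ω, fun ω j => d₁ j ω,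
         fun ω j => s j ω] : Fin 4 → Ω → Fin n → ℝ) P)
    -- the coefficients of `ν` are square-integrable
    (hνL2 : ∀ j, MemLp (ν j) 2 P)
    -- `d₀` and `d₁` have independent mean-zero coefficients of variance `t²/12`
    (hd₁indep : iIndepFun d₁ P)
    (hd₁mean : ∀ j, (∫ ω, d₁ j ω ∂P) = 0)
    (hd₀L2 : ∀ j, MemLp (d₀ j) 2 P) (hd₁L2 : ∀ j, MemLp (d₁ j) 2 P)
    (hd₀var : ∀ j, variance (d₀ j) P = t ^ 2 / 12)
    (hd₁var : ∀ j, variance (d₁ j) P = t ^ 2 / 12)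
    -- `s` has i.i.d. mean-zero coefficients of variance `V_s`
    (hsindep : iIndepFun s P)
    (hsmean : ∀ j, (∫ ω, s j ω ∂P) = 0)
    (hsL2 : ∀ j, MemLp (s j) 2 P)
    (hsvar : ∀ j, variance (s j) P = Vs)
    (i : Fin n) :
    variance (fun ω => redCoeff n
        (Polynomial.C (q' / q) * polyOf n (fun j => ν j ω)
          + polyOf n (fun j => d₀ j ω)
          + polyOf n (fun j => d₁ j ω) * polyOf n (fun j => s j ω)) i) P
      = (q' ^ 2 / q ^ 2) * variance (fun ω => ν i ω) P
        + (t ^ 2 / 12) * (1 + n * Vs) := by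
  have hblocks : ∀ k, AEMeasurable
      ((![fun ω (j : Fin n) => ν j ω, fun ω j => d₀ j ω, fun ω j => d₁ j ω,
         fun ω j => s j ω] : Fin 4 → Ω → Fin n → ℝ) k) P := by
    intro k
    fin_cases k <;>
      exact aemeasurable_pi_lambda _ fun j => MemLp.aemeasurable (p := 2) (by simp [*])
  have hνd₀ : IndepFun (fun ω => q' / q * ν i ω) (d₀ i) P :=
    (hindep.indepFun (show (0 : Fin 4) ≠ 1 by decide)).comp
      ((measurable_pi_apply i).const_mul _) (measurable_pi_apply i)
  have hνd₀_d₁s : IndepFun (fun ω => q' / q * ν i ω + d₀ i ω)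
      (fun ω => ∑ j, (if j ≤ i then 1 else -1) * (d₁ j ω * s (i - j) ω)) P :=
    (hindep.indepFun_prodMk_prodMk₀ hblocks 0 1 2 3 (by decide) (by decide) (by decide)
      (by decide)).comp (φ := fun p : (Fin n → ℝ) × (Fin n → ℝ) => q' / q * p.1 i + p.2 i)
      (ψ := fun p : (Fin n → ℝ) × (Fin n → ℝ) =>
        ∑ j, (if j ≤ i then 1 else -1) * (p.1 j * p.2 (i - j)))
      (by fun_prop) (by fun_prop)
  have hd₁s : iIndepFun (Sum.elim d₁ s) P :=
    hd₁indep.sumElim hsindep (hindep.indepFun (show (2 : Fin 4) ≠ 3 by decide))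
  have : NeZero n := ⟨i.pos.ne'⟩
  have hσ : (fun j => i - j).Injective := sub_right_injective
  rw [show (fun ω => redCoeff n _ i) = fun ω => q' / q * ν i ω + d₀ i ω +
      ∑ j, (if j ≤ i then 1 else -1) * (d₁ j ω * s (i - j) ω) from funext fun ω => by
    rw [redCoeff_add, redCoeff_add, redCoeff_C_mul, redCoeff_polyOf, redCoeff_polyOf,
      redCoeff_polyOf_mul_polyOf],
    hνd₀_d₁s.variance_fun_add (X := fun ω => q' / q * ν i ω + d₀ i ω)
      (((hνL2 i).const_mul _).add (hd₀L2 i)) (memLp_two_sum_mul hd₁s hd₁L2 hsL2 _ _),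
    hνd₀.variance_fun_add ((hνL2 i).const_mul _) (hd₀L2 i), variance_const_mul,
    variance_sum_mul hd₁s hd₁L2 hsL2 hd₁mean hsmean hσ]
  simp only [div_pow, hd₀var, ite_pow, one_pow, even_two, Even.neg_pow, ite_self, hd₁var, hsvar,
    one_mul, Finset.sum_const, Finset.card_univ, Fintype.card_fin, nsmul_eq_mul]
  ring

/-- **variance after modulus switching.** With `ν, d₀, d₁, s` mutually
independent random polynomials in `R_n` as described,
`Var(((q'/q)·ν + d₀ + d₁·s)|_i) = (q'²/q²)·Var(ν|_i) + (t²/12)·(1 + n·V_s)`. -/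
theorem stmt13 {Ω : Type*} [MeasurableSpace Ω] (P : Measure Ω) [IsProbabilityMeasure P]
    (n : ℕ) (hn : 1 ≤ n) (t q q' : ℝ) (ht : 0 < t) (hq' : 0 < q') (hqq : q' ≤ q)
    (Vs : ℝ) (hVs : 0 < Vs)
    (ν d₀ d₁ s : Fin n → Ω → ℝ)
    (hmeas : ∀ f ∈ [ν, d₀, d₁, s], ∀ j, Measurable (f j))
    -- `ν, d₀, d₁, s` are mutually independent
    (hindep : iIndepFun
      (![fun ω (j : Fin n) => ν j ω, fun ω j => d₀ j ω, fun ω j => d₁ j ω,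
         fun ω j => s j ω] : Fin 4 → Ω → Fin n → ℝ) P)
    -- the coefficients of `ν` are square-integrable
    (hνL2 : ∀ j, MemLp (ν j) 2 P)
    -- `d₀` and `d₁` have independent mean-zero coefficients of variance `t²/12`
    (hd₀indep : iIndepFun d₀ P)
    (hd₁indep : iIndepFun d₁ P)
    (hd₀mean : ∀ j, (∫ ω, d₀ j ω ∂P) = 0) (hd₁mean : ∀ j, (∫ ω, d₁ j ω ∂P) = 0)
    (hd₀L2 : ∀ j, MemLp (d₀ j) 2 P) (hd₁L2 : ∀ j, MemLp (d₁ j) 2 P)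
    (hd₀var : ∀ j, variance (d₀ j) P = t ^ 2 / 12)
    (hd₁var : ∀ j, variance (d₁ j) P = t ^ 2 / 12)
    -- `s` has i.i.d. mean-zero coefficients of variance `V_s`
    (hsindep : iIndepFun s P)
    (hsid : ∀ j j', Measure.map (s j) P = Measure.map (s j') P)
    (hsmean : ∀ j, (∫ ω, s j ω ∂P) = 0)
    (hsL2 : ∀ j, MemLp (s j) 2 P)
    (hsvar : ∀ j, variance (s j) P = Vs)
    (i : Fin n) :
    variance (fun ω => redCoeff n
        (Polynomial.C (q' / q) * polyOf n (fun j => ν j ω)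
          + polyOf n (fun j => d₀ j ω)
          + polyOf n (fun j => d₁ j ω) * polyOf n (fun j => s j ω)) i) P
      = (q' ^ 2 / q ^ 2) * variance (fun ω => ν i ω) P
        + (t ^ 2 / 12) * (1 + n * Vs) :=
  stmt13_general P n t q q' Vs ν d₀ d₁ s hindep hνL2 hd₁indep hd₁mean hd₀L2 hd₁L2 hd₀var hd₁var
    hsindep hsmean hsL2 hsvar i
end
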